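/- Let y, ŷ : Fin n → ℝ with E[ŷ] = E[y] and E[ŷ²] = E[y²]. Then for any two prediction vectors p₁, p₂ : Fin n → ℝ, (E[(ŷ − p₁)²] − E[(ŷ − p₂)²]) − (E[(y − p₁)²] − E[(y − p₂)²]) = 2·Cov(p₁ − p₂, y − ŷ). In particular, the fair objective and the original MSE induce the same ordering on predictors that differ by a vector uncorrelated with the unfairness y − ŷ. -/

import Mathlib

/-!
Pointwise, `(ŷ - p₁)² - (ŷ - p₂)² - ((y - p₁)² - (y - p₂)²) = 2 (p₁ - p₂) (y - ŷ)`, so the left-hand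
side is twice the mean of `(p₁ - p₂) (y - ŷ)`. Since `y - ŷ` has mean zero, that mean is the
covariance.
-/

open Finset

/-- Empirical mean of a finite sequence. -/
noncomputable def emean {n : ℕ} (z : Fin n → ℝ) : ℝ := (∑ i, z i) / n

/-- Empirical covariance of two finite sequences. -/
noncomputable def ecov {n : ℕ} (a b : Fin n → ℝ) : ℝ :=
  emean (fun i => (a i - emean a) * (b i - emean b))

section EmpiricalMean

variable {n : ℕ}

theorem emean_sub (a b : Fin n → ℝ) :
    emean (fun i => a i - b i) = emean a - emean b := by
  rw [emean, emean, emean, sum_sub_distrib, sub_div]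

theorem emean_const_mul (c : ℝ) (a : Fin n → ℝ) :
    emean (fun i => c * a i) = c * emean a := by
  rw [emean, emean, ← mul_sum, mul_div_assoc]

theorem ecov_eq_emean_mul_of_emean_eq_zero (a : Fin n → ℝ) {b : Fin n → ℝ}
    (hb : emean b = 0) : ecov a b = emean (fun i => a i * b i) := by
  simp only [ecov, hb, sub_zero, sub_mul]
  rw [emean_sub, emean_const_mul, hb, mul_zero, sub_zero]

end EmpiricalMean

theorem fair_objective_ordering_general {n : ℕ} (y yhat : Fin n → ℝ)
    (h1 : emean yhat = emean y) :
    ∀ p₁ p₂ : Fin n → ℝ,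
      (emean (fun i => (yhat i - p₁ i) ^ 2) - emean (fun i => (yhat i - p₂ i) ^ 2)) -
        (emean (fun i => (y i - p₁ i) ^ 2) - emean (fun i => (y i - p₂ i) ^ 2)) =
      2 * ecov (fun i => p₁ i - p₂ i) (fun i => y i - yhat i) := by
  intro p₁ p₂
  have h_residual : emean (fun i => y i - yhat i) = 0 := by rw [emean_sub, h1, sub_self]
  rw [ecov_eq_emean_mul_of_emean_eq_zero _ h_residual, ← emean_const_mul, ← emean_sub,
    ← emean_sub, ← emean_sub]
  congr 1
  funext i
  ring

theorem fair_objective_ordering {n : ℕ} (y yhat : Fin n → ℝ)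
    (h1 : emean yhat = emean y)
    (h2 : emean (fun i => yhat i ^ 2) = emean (fun i => y i ^ 2)) :
    ∀ p₁ p₂ : Fin n → ℝ,
      (emean (fun i => (yhat i - p₁ i) ^ 2) - emean (fun i => (yhat i - p₂ i) ^ 2)) -
        (emean (fun i => (y i - p₁ i) ^ 2) - emean (fun i => (y i - p₂ i) ^ 2)) =
      2 * ecov (fun i => p₁ i - p₂ i) (fun i => y i - yhat i) :=
  fair_objective_ordering_general y yhat h1
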